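/- The Bounded Quantification Lemma: for every natural number n, Robinson Arithmetic proves that for all x with x < S n̄, we have x = 0̄ ∨ x = 1̄ ∨ … ∨ x = n̄ (a finite disjunction over all numerals up to n). -/

import Mathlib

/-!
In a model of `Q`, `S c + x = S^[n+1] 0` forces `x` to be a numeral `k̄` with `k ≤ n`, by induction
on `n`: by S2, `x` is `0` or `S y`; in the second case A1 and S1 give `S c + y = S^[n] 0`. For
`n = 0` this is impossible, since `S c + y` is itself a successor (S2 with A0 and A1) and S0 applies.
-/

open FirstOrder FirstOrder.Language

/-- Function symbols of the language of arithmetic `{0, S, +, ×}`. -/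
inductive ArithFunc : ℕ → Type
  | zero : ArithFunc 0
  | succ : ArithFunc 1
  | add : ArithFunc 2
  | mul : ArithFunc 2

/-- The first-order language of arithmetic. -/
def L : Language := ⟨ArithFunc, fun _ => Empty⟩

/-- The term `0`. -/
def zeroT {α : Type} : L.Term α := Constants.term ArithFunc.zero

/-- The term `S t`. -/
def succT {α : Type} (t : L.Term α) : L.Term α := Functions.apply₁ ArithFunc.succ t

/-- The term `s + t`. -/
def addT {α : Type} (s t : L.Term α) : L.Term α := Functions.apply₂ ArithFunc.add s t

/-- The term `s × t`. -/
def mulT {α : Type} (s t : L.Term α) : L.Term α := Functions.apply₂ ArithFunc.mul s t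

/-- The numeral `n̄ = S … S 0`. -/
def num {α : Type} : ℕ → L.Term α
  | 0 => zeroT
  | n + 1 => succT (num n)

/-- The `i`-th bounded variable as a term. -/
def v {α : Type} {n : ℕ} (i : Fin n) : L.Term (α ⊕ Fin n) := Term.var (Sum.inr i)

/-- The ordering `s < t := ∃ z, S z + s = t`. -/
def ltF {α : Type} {n : ℕ} (s t : L.Term (α ⊕ Fin n)) : L.BoundedFormula α n :=
  BoundedFormula.ex
    (Term.bdEqual
      (addT (succT (Term.var (Sum.inr (Fin.last n)))) (s.relabel (Sum.map id Fin.castSucc)))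
      (t.relabel (Sum.map id Fin.castSucc)))

/-- Axiom S0 : `∀ x, ¬ S x = 0`. -/
def axS0 : L.Sentence := ∀' ∼(Term.bdEqual (succT (v 0)) zeroT)

/-- Axiom S1 : `∀ x y, S x = S y → x = y`. -/
def axS1 : L.Sentence := ∀' ∀' (Term.bdEqual (succT (v 0)) (succT (v 1)) ⟹ Term.bdEqual (v 0) (v 1))

/-- Axiom S2 : `∀ x, x = 0 ∨ ∃ y, S y = x`. -/
def axS2 : L.Sentence := ∀' (Term.bdEqual (v 0) zeroT ⊔ ∃' (Term.bdEqual (succT (v 1)) (v 0)))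

/-- Axiom A0 : `∀ x, x + 0 = x`. -/
def axA0 : L.Sentence := ∀' (Term.bdEqual (addT (v 0) zeroT) (v 0))

/-- Axiom A1 : `∀ x y, x + S y = S (x + y)`. -/
def axA1 : L.Sentence := ∀' ∀' (Term.bdEqual (addT (v 0) (succT (v 1))) (succT (addT (v 0) (v 1))))

/-- Axiom M0 : `∀ x, x × 0 = 0`. -/
def axM0 : L.Sentence := ∀' (Term.bdEqual (mulT (v 0) zeroT) zeroT)

/-- Axiom M1 : `∀ x y, x × S y = x + (x × y)`. -/
def axM1 : L.Sentence := ∀' ∀' (Term.bdEqual (mulT (v 0) (succT (v 1))) (addT (v 0) (mulT (v 0) (v 1))))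

/-- Robinson Arithmetic. -/
def Q : L.Theory := {axS0, axS1, axS2, axA0, axA1, axM0, axM1}

/-- The disjunction `x = 0̄ ∨ x = 1̄ ∨ … ∨ x = n̄`. -/
def eqDisj : ℕ → L.BoundedFormula Empty 1
  | 0 => Term.bdEqual (v 0) (num 0)
  | n + 1 => eqDisj n ⊔ Term.bdEqual (v 0) (num (n + 1))

variable {M : Type*} [L.Structure M]

def zeroM : M := Structure.funMap (L := L) ArithFunc.zero ![]
def succM (x : M) : M := Structure.funMap (L := L) ArithFunc.succ ![x]
def addM (x y : M) : M := Structure.funMap (L := L) ArithFunc.add ![x, y]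

section Realize

variable {α : Type} (env : α → M)

@[simp] theorem realize_zeroT : (zeroT : L.Term α).realize env = zeroM := by
  simp only [zeroT, zeroM, Term.realize, Constants.term]
  congr 1; ext i; exact i.elim0

@[simp] theorem realize_succT (t : L.Term α) : (succT t).realize env = succM (t.realize env) := by
  simp only [succT, succM, Term.realize, Functions.apply₁]
  congr 1; ext i; fin_cases i; rfl

@[simp] theorem realize_addT (s t : L.Term α) :
    (addT s t).realize env = addM (s.realize env) (t.realize env) := by
  simp only [addT, addM, Term.realize, Functions.apply₂]
  congr 1; ext i; fin_cases i <;> rfl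

@[simp] theorem realize_num (k : ℕ) : (num k : L.Term α).realize env = succM^[k] zeroM := by
  induction k with
  | zero => simp [num]
  | succ k ih => simp [num, ih, Function.iterate_succ_apply']

@[simp] theorem realize_v {n : ℕ} (xs : Fin n → M) (i : Fin n) :
    (v i : L.Term (α ⊕ Fin n)).realize (Sum.elim env xs) = xs i := rfl

@[simp] theorem realize_ltF {n : ℕ} (xs : Fin n → M) (s t : L.Term (α ⊕ Fin n)) :
    (ltF s t).Realize env xs ↔
      ∃ z, addM (succM z) (s.realize (Sum.elim env xs)) = t.realize (Sum.elim env xs) := by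
  simp [ltF, Term.realize_relabel, Sum.elim_comp_map, Fin.snoc_comp_castSucc]

end Realize

@[simp] theorem realize_eqDisj (env : Empty → M) (xs : Fin 1 → M) (n : ℕ) :
    (eqDisj n).Realize env xs ↔ ∃ k ≤ n, xs 0 = succM^[k] zeroM := by
  induction n with
  | zero => simp [eqDisj]
  | succ n ih => simp [eqDisj, ih, Nat.le_succ_iff, or_and_right, exists_or]

section Model

variable [M ⊨ Q]

theorem succM_ne_zeroM (x : M) : succM x ≠ zeroM := by
  have := Q.realize_sentence_of_mem (M := M) (show axS0 ∈ Q by simp [Q])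
  simp_all [axS0, Sentence.Realize, Formula.Realize, Fin.snoc]

theorem succM_injective : Function.Injective (succM : M → M) := by
  have := Q.realize_sentence_of_mem (M := M) (show axS1 ∈ Q by simp [Q])
  simp only [axS1, Sentence.Realize, Formula.Realize, BoundedFormula.realize_all,
    BoundedFormula.realize_imp, BoundedFormula.realize_bdEqual, realize_succT, realize_v] at this
  exact fun x y => this x y

theorem eq_zeroM_or_exists_succM_eq (x : M) : x = zeroM ∨ ∃ y, succM y = x := by
  have := Q.realize_sentence_of_mem (M := M) (show axS2 ∈ Q by simp [Q])
  simp_all [axS2, Sentence.Realize, Formula.Realize, Fin.snoc]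

theorem addM_zeroM (x : M) : addM x zeroM = x := by
  have := Q.realize_sentence_of_mem (M := M) (show axA0 ∈ Q by simp [Q])
  simp_all [axA0, Sentence.Realize, Formula.Realize, Fin.snoc]

theorem addM_succM (x y : M) : addM x (succM y) = succM (addM x y) := by
  have := Q.realize_sentence_of_mem (M := M) (show axA1 ∈ Q by simp [Q])
  simp_all [axA1, Sentence.Realize, Formula.Realize, Fin.snoc]

theorem succM_addM_ne_zeroM (c x : M) : addM (succM c) x ≠ zeroM := by
  rcases eq_zeroM_or_exists_succM_eq x with rfl | ⟨y, rfl⟩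
  · rw [addM_zeroM]
    exact succM_ne_zeroM c
  · rw [addM_succM]
    exact succM_ne_zeroM _

theorem exists_le_eq_iterate_of_succM_addM_eq {c : M} (n : ℕ) {x : M}
    (h : addM (succM c) x = succM^[n + 1] zeroM) : ∃ k ≤ n, x = succM^[k] zeroM := by
  rcases eq_zeroM_or_exists_succM_eq x with rfl | ⟨y, rfl⟩
  · exact ⟨0, n.zero_le, rfl⟩
  rw [addM_succM, Function.iterate_succ_apply'] at h
  cases n with
  | zero => exact absurd (succM_injective h) (succM_addM_ne_zeroM c y)
  | succ n =>
    obtain ⟨k, hk, rfl⟩ := exists_le_eq_iterate_of_succM_addM_eq n (succM_injective h)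
    exact ⟨k + 1, by omega, (Function.iterate_succ_apply' ..).symm⟩

end Model

/-- The Bounded Quantification Lemma: for every `n`, Robinson Arithmetic proves
`∀ x, x < S n̄ → (x = 0̄ ∨ … ∨ x = n̄)`. -/
theorem bounded_quantification (n : ℕ) :
    Q ⊨ᵇ (∀' (ltF (α := Empty) (v 0) (succT (num n)) ⟹ eqDisj n) : L.Sentence) := by
  intro M env xs
  simp only [BoundedFormula.realize_all, BoundedFormula.realize_imp, realize_ltF, realize_eqDisj,
    realize_v, realize_succT, realize_num, ← Function.iterate_succ_apply' succM]
  rintro x ⟨c, hc⟩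
  exact exists_le_eq_iterate_of_succM_addM_eq n hc
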